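/- Let f : {0,1}* ⇀ {0,1}* be a partial function whose domain of definition dom f is prefix-free and nonempty. For y ∈ img f, set m_Y(y) := ∑_{x : f(x)=y} 2^{−ℓ(x)}, set Ω := ∑_{x ∈ dom f} 2^{−ℓ(x)} ∈ (0,1], and define the coin-flipping heat function G_coin(x) := (ln 2)·ℓ(x) + ln m_Y(f(x)) for x ∈ dom f, and the coin-flipping input distribution p_coin(x) := 2^{−ℓ(x)}/Ω on dom f. Then: (i) for every y ∈ img f, ∑_{x : f(x)=y} e^{−G_coin(x)} = 1; and (ii) for every x ∈ dom f, p_coin(x)/(f_*p_coin)(f(x)) = e^{−G_coin(x)}, i.e., the conditional input distribution of p_coin given each output y coincides with the distribution x ↦ e^{−G_coin(x)} on the fiber f^{-1}(y). Consequently both the mismatch-cost term and the residual term of the entropy-production decomposition vanish for p_coin, so the coin-flipping realization is thermodynamically reversible on the coin-flipping input distribution. -/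
import Mathlib


open scoped ENNReal

/-- A set of finite binary strings is prefix-free if no element is a proper
prefix of another element. -/
def PrefixFree (S : Set (List Bool)) : Prop :=
  ∀ x ∈ S, ∀ y ∈ S, x <+: y → x = y

/-- The weight `2^{−ℓ(x)}` of a binary string `x`. -/
noncomputable def wt (x : List Bool) : ℝ := (2 : ℝ) ^ (-(x.length : ℤ))

/-- Pushforward of a distribution `p` along a map `f`:
`(f_*p)(y) = ∑_{x : f(x)=y} p(x)`. -/
noncomputable def pushforward (f : List Bool → List Bool) (p : List Bool → ℝ) :
    List Bool → ℝ :=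
  fun y => ∑' x, Set.indicator {x | f x = y} p x

/-- `m_Y(y) = ∑_{x ∈ D : f(x)=y} 2^{−ℓ(x)}`. -/
noncomputable def mY (D : Set (List Bool)) (f : List Bool → List Bool)
    (y : List Bool) : ℝ :=
  ∑' x, Set.indicator {x | x ∈ D ∧ f x = y} wt x

/-- The halting probability `Ω = ∑_{x ∈ D} 2^{−ℓ(x)}`. -/
noncomputable def Omega (D : Set (List Bool)) : ℝ :=
  ∑' x, Set.indicator D wt x

/-- The coin-flipping heat function
`G_coin(x) = (ln 2)·ℓ(x) + ln m_Y(f(x))`. -/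
noncomputable def Gcoin (D : Set (List Bool)) (f : List Bool → List Bool)
    (x : List Bool) : ℝ :=
  Real.log 2 * (x.length : ℝ) + Real.log (mY D f (f x))

/-- The coin-flipping input distribution `p_coin(x) = 2^{−ℓ(x)}/Ω` on `D`. -/
noncomputable def pcoin (D : Set (List Bool)) (x : List Bool) : ℝ :=
  Set.indicator D wt x / Omega D

lemma wt_pos (x : List Bool) : 0 < wt x := by unfold wt; positivity

/-- all binary strings of length `m` as a finset -/
def full (m : ℕ) : Finset (List Bool) :=
  (Finset.univ : Finset (Fin m → Bool)).image List.ofFn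

lemma mem_full {m : ℕ} {z : List Bool} : z ∈ full m ↔ z.length = m := by
  simp only [full, Finset.mem_image, Finset.mem_univ, true_and]
  constructor
  · rintro ⟨g, rfl⟩; simp
  · intro h
    subst h
    exact ⟨z.get, List.ofFn_get z⟩

lemma card_full (m : ℕ) : (full m).card = 2 ^ m := by
  rw [full, Finset.card_image_of_injective _ List.ofFn_injective, Finset.card_univ]
  simp

lemma kraft (D : Set (List Bool)) (hD : PrefixFree D) (S : Finset (List Bool))
    (hS : ∀ x ∈ S, x ∈ D) : ∑ x ∈ S, wt x ≤ 1 := by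
  classical
  set n := S.sup List.length with hn
  have hlen : ∀ x ∈ S, x.length ≤ n := fun x hx => Finset.le_sup hx
  set E : List Bool → Finset (List Bool) :=
    fun x => (full (n - x.length)).image (x ++ ·) with hE
  have hdisj : ∀ x ∈ S, ∀ y ∈ S, x ≠ y → Disjoint (E x) (E y) := by
    intro x hx y hy hxy
    rw [Finset.disjoint_left]
    rintro z hzx hzy
    obtain ⟨t, -, rfl⟩ := Finset.mem_image.mp hzx
    obtain ⟨s, -, hs⟩ := Finset.mem_image.mp hzy
    have hpx : x <+: x ++ t := ⟨t, rfl⟩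
    have hpy : y <+: x ++ t := ⟨s, hs⟩
    rcases List.prefix_or_prefix_of_prefix hpx hpy with h | h
    · exact hxy (hD x (hS x hx) y (hS y hy) h)
    · exact hxy ((hD y (hS y hy) x (hS x hx) h).symm)
  have key : ∑ x ∈ S, 2 ^ (n - x.length) ≤ 2 ^ n := by
    calc ∑ x ∈ S, 2 ^ (n - x.length) = ∑ x ∈ S, (E x).card := by
          refine Finset.sum_congr rfl fun x _ => ?_
          rw [hE, Finset.card_image_of_injective _
            (fun a b h => List.append_cancel_left h), card_full]
      _ = (S.biUnion E).card := (Finset.card_biUnion hdisj).symm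
      _ ≤ (full n).card := by
          refine Finset.card_le_card ?_
          intro z hz
          obtain ⟨x, hx, hzx⟩ := Finset.mem_biUnion.mp hz
          obtain ⟨t, ht, rfl⟩ := Finset.mem_image.mp hzx
          rw [mem_full] at ht ⊢
          rw [List.length_append, ht]
          have := hlen x hx
          omega
      _ = 2 ^ n := card_full n
  have hsum : ∑ x ∈ S, wt x = (∑ x ∈ S, ((2:ℝ) ^ (n - x.length))) * 2 ^ (-(n:ℤ)) := by
    rw [Finset.sum_mul]
    refine Finset.sum_congr rfl fun x hx => ?_
    unfold wt
    rw [← zpow_natCast (2:ℝ) (n - x.length), ← zpow_add₀ (two_ne_zero)]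
    congr 1
    have := hlen x hx
    omega
  rw [hsum]
  have hkeyR : (∑ x ∈ S, ((2:ℝ) ^ (n - x.length))) ≤ 2 ^ n := by exact_mod_cast key
  have hpos : (0:ℝ) ≤ 2 ^ (-(n:ℤ)) := by positivity
  calc (∑ x ∈ S, ((2:ℝ) ^ (n - x.length))) * 2 ^ (-(n:ℤ))
      ≤ (2:ℝ) ^ n * 2 ^ (-(n:ℤ)) := mul_le_mul_of_nonneg_right hkeyR hpos
    _ = 1 := by
        rw [← zpow_natCast (2:ℝ) n, ← zpow_add₀ two_ne_zero]
        simp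

lemma sum_ind_le (D : Set (List Bool)) (hD : PrefixFree D) (u : Finset (List Bool)) :
    ∑ x ∈ u, Set.indicator D wt x ≤ 1 := by
  classical
  have h1 : ∑ x ∈ u, Set.indicator D wt x
      = ∑ x ∈ u.filter (fun x => x ∈ D), wt x := by
    rw [Finset.sum_filter]
    exact Finset.sum_congr rfl fun x _ => Set.indicator_apply D wt x
  rw [h1]
  exact kraft D hD _ (fun x hx => (Finset.mem_filter.mp hx).2)

lemma ind_nonneg (D : Set (List Bool)) : ∀ x, 0 ≤ Set.indicator D wt x :=
  fun x => Set.indicator_nonneg (fun y _ => (wt_pos y).le) x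

lemma summable_ind (D : Set (List Bool)) (hD : PrefixFree D) :
    Summable (Set.indicator D wt) :=
  summable_of_sum_le (ind_nonneg D) (sum_ind_le D hD)
lemma summable_ind_fiber (D : Set (List Bool)) (hD : PrefixFree D)
    (f : List Bool → List Bool) (y : List Bool) :
    Summable (Set.indicator {x | x ∈ D ∧ f x = y} wt) := by
  refine Summable.of_nonneg_of_le
    (fun x => Set.indicator_nonneg (fun z _ => (wt_pos z).le) x)
    (fun x => ?_) (summable_ind D hD)
  exact Set.indicator_le_indicator_of_subset (fun z hz => hz.1)
    (fun z => (wt_pos z).le) x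

lemma mY_pos (D : Set (List Bool)) (hD : PrefixFree D)
    (f : List Bool → List Bool) {x₀ : List Bool} (hx₀ : x₀ ∈ D) :
    0 < mY D f (f x₀) := by
  have hle := Summable.le_tsum (summable_ind_fiber D hD f (f x₀)) x₀
    (fun j _ => Set.indicator_nonneg (fun z _ => (wt_pos z).le) j)
  have : Set.indicator {x | x ∈ D ∧ f x = f x₀} wt x₀ = wt x₀ :=
    Set.indicator_of_mem (show x₀ ∈ {x | x ∈ D ∧ f x = f x₀} from ⟨hx₀, rfl⟩) wt
  rw [this] at hle
  exact lt_of_lt_of_le (wt_pos x₀) hle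

lemma wt_eq_exp (x : List Bool) :
    wt x = Real.exp (-(Real.log 2 * (x.length : ℝ))) := by
  unfold wt
  rw [← Real.rpow_intCast 2 (-(x.length : ℤ)), Real.rpow_def_of_pos two_pos]
  push_cast
  ring_nf

lemma exp_neg_Gcoin (D : Set (List Bool)) (f : List Bool → List Bool)
    {x : List Bool} (hm : 0 < mY D f (f x)) :
    Real.exp (-(Gcoin D f x)) = wt x / mY D f (f x) := by
  rw [Gcoin, neg_add, Real.exp_add, ← wt_eq_exp, Real.exp_neg,
    Real.exp_log hm, div_eq_mul_inv]

/-- The zero-entropy-production property of the coin-flipping realization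
(Section IV of the paper): for a partial function `f` with nonempty
prefix-free domain `D`, one has `Ω ∈ (0,1]`, and (i) for every `y ∈ img f`,
`∑_{x ∈ D : f(x)=y} e^{−G_coin(x)} = 1`; (ii) for every `x ∈ D`,
`p_coin(x)/(f_*p_coin)(f(x)) = e^{−G_coin(x)}`, i.e. the conditional input
distribution of `p_coin` given each output coincides with
`x ↦ e^{−G_coin(x)}` on the fiber.  Consequently both the mismatch-cost and
residual terms of the entropy-production decomposition vanish for `p_coin`. -/
theorem stmt6 (D : Set (List Bool)) (hD : PrefixFree D) (hne : D.Nonempty)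
    (f : List Bool → List Bool) :
    (0 < Omega D ∧ Omega D ≤ 1)
    ∧ (∀ y ∈ f '' D,
        (∑' x, Set.indicator {x | x ∈ D ∧ f x = y}
          (fun x => Real.exp (-(Gcoin D f x))) x) = 1)
    ∧ (∀ x ∈ D,
        pcoin D x / pushforward f (pcoin D) (f x) = Real.exp (-(Gcoin D f x))) := by
  obtain ⟨x₁, hx₁⟩ := hne
  have hOpos : 0 < Omega D := by
    have hle := Summable.le_tsum (summable_ind D hD) x₁ (fun j _ => ind_nonneg D j)
    rw [Set.indicator_of_mem hx₁] at hle
    exact lt_of_lt_of_le (wt_pos x₁) hle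
  refine ⟨⟨hOpos, Summable.tsum_le_of_sum_le (summable_ind D hD) (sum_ind_le D hD)⟩, ?_, ?_⟩
  · rintro y ⟨x₀, hx₀, rfl⟩
    have hm : 0 < mY D f (f x₀) := mY_pos D hD f hx₀
    have hpt : Set.indicator {x | x ∈ D ∧ f x = f x₀}
        (fun x => Real.exp (-(Gcoin D f x)))
        = fun x => Set.indicator {x | x ∈ D ∧ f x = f x₀} wt x / mY D f (f x₀) := by
      funext x
      by_cases hx : x ∈ {x | x ∈ D ∧ f x = f x₀}
      · rw [Set.indicator_of_mem hx, Set.indicator_of_mem hx]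
        have hfx : f x = f x₀ := hx.2
        rw [exp_neg_Gcoin D f (hfx ▸ hm), hfx]
      · rw [Set.indicator_of_notMem hx, Set.indicator_of_notMem hx, zero_div]
    rw [hpt, tsum_div_const]
    exact div_self hm.ne'
  · intro x hx
    have hm : 0 < mY D f (f x) := mY_pos D hD f hx
    have hpush : pushforward f (pcoin D) (f x) = mY D f (f x) / Omega D := by
      have hpt : Set.indicator {x' | f x' = f x} (pcoin D)
          = fun x' => Set.indicator {x' | x' ∈ D ∧ f x' = f x} wt x' / Omega D := by
        funext z
        by_cases hz : f z = f x
        · rw [Set.indicator_of_mem (show z ∈ {x' | f x' = f x} from hz), pcoin]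
          by_cases hzD : z ∈ D
          · rw [Set.indicator_of_mem hzD, Set.indicator_of_mem (show z ∈ {x' | x' ∈ D ∧ f x' = f x} from ⟨hzD, hz⟩)]
          · rw [Set.indicator_of_notMem hzD,
              Set.indicator_of_notMem (fun h => hzD h.1)]
        · rw [Set.indicator_of_notMem (show z ∉ {x' | f x' = f x} from hz),
            Set.indicator_of_notMem (fun h => hz h.2), zero_div]
      rw [pushforward, hpt, tsum_div_const, mY]
    rw [hpush, exp_neg_Gcoin D f hm, pcoin, Set.indicator_of_mem hx]
    rw [div_div_div_eq]
    rw [mul_comm (Omega D), mul_div_mul_right _ _ hOpos.ne']
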